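/- arXiv:2210.02958 — 5 statements merged into one kernel-verified Lean document; each statement's English description precedes it below -/
import Mathlib

section
/- Fix n ≥ 3, pairwise distinct indices j, k, ℓ ∈ Fin n, and c ∈ ℝ with c ≠ 0, and let φ be the shear flow defined by φ(t,x)_j = x_j cos(c x_ℓ t) + x_k sin(c x_ℓ t), φ(t,x)_k = −x_j sin(c x_ℓ t) + x_k cos(c x_ℓ t), φ(t,x)_p = x_p for p ∉ {j,k}. Let x ∈ ℝⁿ with x_ℓ ≠ 0, let m ∈ ℕ, and set t_m := 2πm / (c x_ℓ). Then φ(t_m, x) = x, the map y ↦ φ(t_m, y) is Fréchet differentiable at x, and its derivative equals id + m • A, where A : ℝⁿ → ℝⁿ is the linear map A(η) := (2π / x_ℓ) η_ℓ (x_k e_j − x_j e_k). -/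
open Real

/-!
In the `(j, k)`-plane the flow rotates `y` by the angle `θ(y) = c y_ℓ t`, so
`φ_t(y) = y + (cos θ(y) - 1) • P y + sin θ(y) • J y` with `P` the projection onto the plane and
`J y = y_k e_j - y_j e_k`. At `t = t_m` the angle at `x` is `2πm`, where `cos θ - 1`, `sin θ` and
`cos' θ = -sin θ` all vanish; the product rule then leaves only `id + dθ ⊗ J x`, and
`dθ = (2πm / x_ℓ) dy_ℓ` turns `dθ ⊗ J x` into `m • A`.
-/

/-- The explicit shear flow: rotation in the `(j,k)`-plane with angular velocity `c * x ℓ`. -/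
noncomputable def shearFlow (n : ℕ) (j k ℓ : Fin n) (c : ℝ) (t : ℝ) (x : Fin n → ℝ) :
    Fin n → ℝ :=
  fun p =>
    if p = j then x j * Real.cos (c * x ℓ * t) + x k * Real.sin (c * x ℓ * t)
    else if p = k then -(x j) * Real.sin (c * x ℓ * t) + x k * Real.cos (c * x ℓ * t)
    else x p

/-- The linear map `A η := (2π / x ℓ) * η ℓ • (x k • e j - x j • e k)`. -/
noncomputable def shearNilpotent (n : ℕ) (j k ℓ : Fin n) (x : Fin n → ℝ) :
    (Fin n → ℝ) →L[ℝ] (Fin n → ℝ) :=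
  (2 * Real.pi / x ℓ) •
    ((ContinuousLinearMap.proj ℓ : (Fin n → ℝ) →L[ℝ] ℝ).smulRight
      ((x k) • (Pi.single j 1 : Fin n → ℝ) - (x j) • (Pi.single k 1 : Fin n → ℝ)))

theorem hasFDerivAt_add_cos_sub_one_smul_add_sin_smul {E : Type*} [NormedAddCommGroup E]
    [NormedSpace ℝ E] {θ : E → ℝ} {θ' : E →L[ℝ] ℝ} {x : E}
    (P J : E →L[ℝ] E) (hθ : HasFDerivAt θ θ' x) (hcos : cos (θ x) = 1) (hsin : sin (θ x) = 0) :
    HasFDerivAt (fun y => y + (cos (θ y) - 1) • P y + sin (θ y) • J y)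
      (ContinuousLinearMap.id ℝ E + θ'.smulRight (J x)) x := by
  have h := ((hasFDerivAt_id x).add ((hθ.cos.sub_const 1).smul P.hasFDerivAt)).add
    (hθ.sin.smul J.hasFDerivAt)
  refine h.congr_fderiv ?_
  ext η
  simp [hcos, hsin]

section Shear

variable {n : ℕ} {j k : Fin n}

noncomputable def shearPlaneProj (n : ℕ) (j k : Fin n) : (Fin n → ℝ) →L[ℝ] (Fin n → ℝ) :=
  (ContinuousLinearMap.proj j).smulRight (Pi.single j 1) +
    (ContinuousLinearMap.proj k).smulRight (Pi.single k 1)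

noncomputable def shearGenerator (n : ℕ) (j k : Fin n) : (Fin n → ℝ) →L[ℝ] (Fin n → ℝ) :=
  (ContinuousLinearMap.proj k).smulRight (Pi.single j 1) -
    (ContinuousLinearMap.proj j).smulRight (Pi.single k 1)

theorem shearPlaneProj_apply (y : Fin n → ℝ) :
    shearPlaneProj n j k y = y j • Pi.single j 1 + y k • Pi.single k 1 := by
  simp [shearPlaneProj]

theorem shearGenerator_apply (y : Fin n → ℝ) :
    shearGenerator n j k y = y k • Pi.single j 1 - y j • Pi.single k 1 := by
  simp [shearGenerator]

theorem shearFlow_eq_add_cos_sub_one_smul_add_sin_smul (hjk : j ≠ k) (ℓ : Fin n) (c t : ℝ)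
    (y : Fin n → ℝ) :
    shearFlow n j k ℓ c t y = y + (cos (c * y ℓ * t) - 1) • shearPlaneProj n j k y +
      sin (c * y ℓ * t) • shearGenerator n j k y := by
  funext p
  simp only [shearFlow, shearPlaneProj_apply, shearGenerator_apply, Pi.add_apply, Pi.sub_apply,
    Pi.smul_apply, Pi.single_apply, smul_eq_mul]
  split_ifs with hpj hpk
  · exact absurd (hpj ▸ hpk) hjk
  all_goals subst_vars; ring

theorem shearNilpotent_eq_smul_smulRight (ℓ : Fin n) (x : Fin n → ℝ) :
    shearNilpotent n j k ℓ x =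
      (2 * π / x ℓ) • (ContinuousLinearMap.proj ℓ).smulRight (shearGenerator n j k x) := by
  simp [shearNilpotent, shearGenerator_apply]

end Shear

theorem cos_eq_one_and_sin_eq_zero_of_eq_nat_mul_two_pi {θ : ℝ} {m : ℕ} (h : θ = 2 * π * m) :
    cos θ = 1 ∧ sin θ = 0 := by
  subst h
  refine ⟨by rw [mul_comm, cos_nat_mul_two_pi], ?_⟩
  exact sin_eq_zero_iff.mpr ⟨2 * m, by push_cast; ring⟩

theorem shearFlow_return_map_deriv_general
    (n : ℕ) (j k ℓ : Fin n)
    (hjk : j ≠ k)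
    (c : ℝ) (hc : c ≠ 0)
    (x : Fin n → ℝ) (hx : x ℓ ≠ 0) (m : ℕ) :
    shearFlow n j k ℓ c (2 * Real.pi * m / (c * x ℓ)) x = x ∧
    HasFDerivAt (fun y => shearFlow n j k ℓ c (2 * Real.pi * m / (c * x ℓ)) y)
      (ContinuousLinearMap.id ℝ (Fin n → ℝ) + (m : ℝ) • shearNilpotent n j k ℓ x) x := by
  set T := 2 * π * m / (c * x ℓ)
  have hturn : c * x ℓ * T = 2 * π * m := mul_div_cancel₀ _ (mul_ne_zero hc hx)
  obtain ⟨hcos, hsin⟩ := cos_eq_one_and_sin_eq_zero_of_eq_nat_mul_two_pi hturn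
  have hangle : HasFDerivAt (fun y : Fin n → ℝ => c * y ℓ * T)
      ((c * T) • (ContinuousLinearMap.proj ℓ : (Fin n → ℝ) →L[ℝ] ℝ)) x := by
    refine (((hasFDerivAt_apply ℓ x).const_mul c).mul_const T).congr_fderiv ?_
    ext η
    simp only [FunLike.coe_smul, Pi.smul_apply, smul_eq_mul]
    ring
  simp only [shearFlow_eq_add_cos_sub_one_smul_add_sin_smul hjk]
  refine ⟨by simp [hcos, hsin], ?_⟩
  refine (hasFDerivAt_add_cos_sub_one_smul_add_sin_smul _ _ hangle hcos hsin).congr_fderiv ?_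
  have hcT : c * T = m * (2 * π / x ℓ) := by
    field_simp
    linear_combination hturn
  rw [shearNilpotent_eq_smul_smulRight, hcT, smul_smul]
  ext η
  simp [mul_assoc]

/-- if `x ℓ ≠ 0` and `t_m := 2πm/(c x ℓ)`, then `φ(t_m, x) = x`, the map
`y ↦ φ(t_m, y)` is Fréchet differentiable at `x`, and its derivative is `id + m • A`,
with `A η := (2π / x ℓ) * η ℓ • (x k • e j - x j • e k)`. -/
theorem shearFlow_return_map_deriv
    (n : ℕ) (hn : 3 ≤ n) (j k ℓ : Fin n)
    (hjk : j ≠ k) (hjl : j ≠ ℓ) (hkl : k ≠ ℓ)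
    (c : ℝ) (hc : c ≠ 0)
    (x : Fin n → ℝ) (hx : x ℓ ≠ 0) (m : ℕ) :
    shearFlow n j k ℓ c (2 * Real.pi * m / (c * x ℓ)) x = x ∧
    HasFDerivAt (fun y => shearFlow n j k ℓ c (2 * Real.pi * m / (c * x ℓ)) y)
      (ContinuousLinearMap.id ℝ (Fin n → ℝ) + (m : ℝ) • shearNilpotent n j k ℓ x) x :=
  shearFlow_return_map_deriv_general n j k ℓ hjk c hc x hx m
end

section
/- Fix n ≥ 3, pairwise distinct indices j, k, ℓ ∈ Fin n, and c ∈ ℝ with c ≠ 0, and let φ be the shear flow defined by φ(t,x)_j = x_j cos(c x_ℓ t) + x_k sin(c x_ℓ t), φ(t,x)_k = −x_j sin(c x_ℓ t) + x_k cos(c x_ℓ t), φ(t,x)_p = x_p for p ∉ {j,k}. Let x ∈ ℝⁿ satisfy x_ℓ ≠ 0 and (x_j, x_k) ≠ (0,0), and for m ∈ ℕ set t_m := 2πm / (c x_ℓ). Then for every symmetric positive-definite bilinear form g on ℝⁿ and every α ∈ ℝ there exist m ∈ ℕ and η ∈ ℝⁿ such that g(Dφ_{t_m}(x) η, Dφ_{t_m}(x)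 η) ≠ α g(η, η), where Dφ_{t_m}(x) denotes the Fréchet derivative of y ↦ φ(t_m, y) at x. In other words, the derivatives of the return maps φ_{t_m} at x cannot all be conformal with a common conformal factor with respect to any inner product on ℝⁿ. -/
open Real

/-!
At a return time `t` (rotation angle `c x_ℓ t ∈ 2πℤ`) the derivative of `φ_t` at `x` is
`η ↦ η + c t η_ℓ w`, where `w = x_k e_j - x_j e_k` is the infinitesimal rotation of
`x`. Along `η = e_ℓ` the return maps therefore send `e_ℓ` to `e_ℓ + m s w` with `s = 2π / x_ℓ`,
so `m ↦ g(Dφ_{t_m} e_ℓ, Dφ_{t_m} e_ℓ)` is a quadratic polynomial in `m` with leading coefficient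
`s² g(w, w) > 0`: its second difference cannot vanish, while conformality with factor `α` would
make it constant.
-/

def planeRotationField {n : ℕ} (j k : Fin n) (x : Fin n → ℝ) : Fin n → ℝ :=
  Pi.single j (x k) - Pi.single k (x j)

lemma planeRotationField_ne_zero {n : ℕ} {j k : Fin n} (hjk : j ≠ k) {x : Fin n → ℝ}
    (hx : ¬ (x j = 0 ∧ x k = 0)) : planeRotationField j k x ≠ 0 := by
  intro h
  refine hx ⟨?_, ?_⟩
  · simpa [planeRotationField, hjk] using congrFun h k
  · simpa [planeRotationField, hjk] using congrFun h j

lemma LinearMap.second_difference_apply_add_smul_self {R M : Type*} [CommRing R]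
    [AddCommGroup M] [Module R M] (g : M →ₗ[R] M →ₗ[R] R) (v w : M) (r : R) :
    g (v + (2 * r) • w) (v + (2 * r) • w) - 2 * g (v + r • w) (v + r • w) + g v v
      = 2 * r ^ 2 * g w w := by
  simp only [map_add, map_smul, LinearMap.add_apply, LinearMap.smul_apply, smul_eq_mul]
  ring

lemma hasFDerivAt_shearFlow_of_cos_eq_one_of_sin_eq_zero {n : ℕ} {j k : Fin n} (hjk : j ≠ k)
    (ℓ : Fin n) (c t : ℝ) (x : Fin n → ℝ)
    (hcos : cos (c * x ℓ * t) = 1) (hsin : sin (c * x ℓ * t) = 0) :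
    HasFDerivAt (shearFlow n j k ℓ c t)
      (ContinuousLinearMap.id ℝ (Fin n → ℝ) +
        (c * t) • (ContinuousLinearMap.proj ℓ).smulRight (planeRotationField j k x)) x := by
  have hangle : HasFDerivAt (fun y : Fin n → ℝ => c * y ℓ * t)
      ((c * t) • ContinuousLinearMap.proj (R := ℝ) (φ := fun _ : Fin n => ℝ) ℓ) x :=
    (((hasFDerivAt_apply ℓ x).const_mul c).mul_const t).congr_fderiv
      (by ext; simp only [smul_apply, ContinuousLinearMap.proj_apply, smul_eq_mul]; ring)
  rw [hasFDerivAt_pi']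
  intro p
  unfold shearFlow
  split_ifs with hpj hpk
  · subst hpj
    refine (((hasFDerivAt_apply p x).mul hangle.cos).add
      ((hasFDerivAt_apply k x).mul hangle.sin)).congr_fderiv ?_
    ext η
    simp only [add_apply, smul_apply, ContinuousLinearMap.comp_apply,
      ContinuousLinearMap.id_apply, ContinuousLinearMap.smulRight_apply,
      ContinuousLinearMap.proj_apply, smul_eq_mul, hcos, hsin, planeRotationField, Pi.add_apply,
      Pi.smul_apply, Pi.sub_apply, Pi.single_eq_same, Pi.single_eq_of_ne hjk]
    ring
  · subst hpk
    refine (((hasFDerivAt_apply j x).neg.mul hangle.sin).add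
      ((hasFDerivAt_apply p x).mul hangle.cos)).congr_fderiv ?_
    ext η
    simp only [add_apply, neg_apply, smul_apply, ContinuousLinearMap.comp_apply,
      ContinuousLinearMap.id_apply, ContinuousLinearMap.smulRight_apply,
      ContinuousLinearMap.proj_apply, smul_eq_mul, hcos, hsin, planeRotationField, Pi.add_apply,
      Pi.smul_apply, Pi.sub_apply, Pi.single_eq_same, Pi.single_eq_of_ne hpj]
    ring
  · refine (hasFDerivAt_apply p x).congr_fderiv ?_
    ext η
    simp [planeRotationField, hpj, hpk]

lemma fderiv_shearFlow_returnTime_apply {n : ℕ} {j k : Fin n} (hjk : j ≠ k) (ℓ : Fin n)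
    {c : ℝ} (hc : c ≠ 0) {x : Fin n → ℝ} (hx : x ℓ ≠ 0) (m : ℕ) (η : Fin n → ℝ) :
    fderiv ℝ (shearFlow n j k ℓ c (2 * π * m / (c * x ℓ))) x η
      = η + (m * (2 * π / x ℓ) * η ℓ) • planeRotationField j k x := by
  have hangle : c * x ℓ * (2 * π * m / (c * x ℓ)) = m * (2 * π) := by field_simp
  rw [(hasFDerivAt_shearFlow_of_cos_eq_one_of_sin_eq_zero hjk ℓ c _ x
    (by simpa only [hangle, cos_zero] using cos_periodic.nat_mul_eq m)
    (by simpa only [hangle, sin_zero] using sin_periodic.nat_mul_eq m)).fderiv]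
  simp only [add_apply, ContinuousLinearMap.id_apply, smul_apply,
    ContinuousLinearMap.smulRight_apply, ContinuousLinearMap.proj_apply, smul_smul]
  congr 2
  field_simp

theorem shearFlow_return_maps_not_conformal_general
    (n : ℕ) (j k ℓ : Fin n)
    (hjk : j ≠ k)
    (c : ℝ) (hc : c ≠ 0)
    (x : Fin n → ℝ) (hx : x ℓ ≠ 0) (hx' : ¬ (x j = 0 ∧ x k = 0))
    (g : (Fin n → ℝ) →ₗ[ℝ] (Fin n → ℝ) →ₗ[ℝ] ℝ)
    (hpos : ∀ v, v ≠ 0 → 0 < g v v)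
    (α : ℝ) :
    ∃ (m : ℕ) (η : Fin n → ℝ),
      g (fderiv ℝ (fun y => shearFlow n j k ℓ c (2 * Real.pi * m / (c * x ℓ)) y) x η)
        (fderiv ℝ (fun y => shearFlow n j k ℓ c (2 * Real.pi * m / (c * x ℓ)) y) x η)
      ≠ α * g η η := by
  by_contra! hconformal
  set e : Fin n → ℝ := Pi.single ℓ 1
  set w := planeRotationField j k x
  set s := 2 * π / x ℓ
  have hreturn (m : ℕ) : g (e + (m * s) • w) (e + (m * s) • w) = α * g e e := by
    simpa [fderiv_shearFlow_returnTime_apply hjk ℓ hc hx, e] using hconformal m e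
  have hflat : 2 * s ^ 2 * g w w = 0 := by
    rw [← LinearMap.second_difference_apply_add_smul_self g e w s]
    have h0 := hreturn 0
    have h1 := hreturn 1
    have h2 := hreturn 2
    simp only [Nat.cast_zero, zero_mul, zero_smul, add_zero, Nat.cast_one, one_mul,
      Nat.cast_ofNat] at h0 h1 h2
    rw [h0, h1, h2]
    ring
  have hs : s ≠ 0 := div_ne_zero (by positivity) hx
  have hw : 0 < g w w := hpos w (planeRotationField_ne_zero hjk hx')
  exact (by positivity : 2 * s ^ 2 * g w w ≠ 0) hflat

/-- at a point `x` with `x ℓ ≠ 0` and `(x j, x k) ≠ (0,0)`, the derivatives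
at `x` of the return maps `φ_{t_m}`, `t_m := 2πm/(c x ℓ)`, cannot all be conformal with
a common conformal factor with respect to any inner product on `ℝⁿ`. -/
theorem shearFlow_return_maps_not_conformal
    (n : ℕ) (hn : 3 ≤ n) (j k ℓ : Fin n)
    (hjk : j ≠ k) (hjl : j ≠ ℓ) (hkl : k ≠ ℓ)
    (c : ℝ) (hc : c ≠ 0)
    (x : Fin n → ℝ) (hx : x ℓ ≠ 0) (hx' : ¬ (x j = 0 ∧ x k = 0))
    (g : (Fin n → ℝ) →ₗ[ℝ] (Fin n → ℝ) →ₗ[ℝ] ℝ)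
    (hsymm : ∀ v w, g v w = g w v)
    (hpos : ∀ v, v ≠ 0 → 0 < g v v)
    (α : ℝ) :
    ∃ (m : ℕ) (η : Fin n → ℝ),
      g (fderiv ℝ (fun y => shearFlow n j k ℓ c (2 * Real.pi * m / (c * x ℓ)) y) x η)
        (fderiv ℝ (fun y => shearFlow n j k ℓ c (2 * Real.pi * m / (c * x ℓ)) y) x η)
      ≠ α * g η η :=
  shearFlow_return_maps_not_conformal_general n j k ℓ hjk c hc x hx hx' g hpos α
end

section
/- Let Y be a metric space, Ω ⊆ ℝ^p an open set, d ∈ ℕ, and M : Y × Ω → Matrix (Fin d) (Fin d) ℝ a continuous map such that M(y,ω) is positive semidefinite (symmetric, with nonnegative determinant) for every (y,ω). Let μ be a finite Borel measure on Ω that is absolutely continuous with respect to Lebesgue measure, and let K ⊆ Ω be compact. For y ∈ Y set A_K(y) := {ω ∈ K : det M(y,ω) = 0}. Assume that for every y ∈ Y the set {ω ∈ Ω : det M(y,ω) = 0} has Lebesgue measure zero. Then for every y_* ∈ Y and every ε > 0 there exist an open set U ⊆ Ω with μ(U) < ε and a δ > 0 such that A_K(y) ⊆ U for every y with dist(y,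 y_*) < δ; moreover, there exist an open set W ⊆ ℝ^p containing K ∩ Uᶜ and a constant α > 0 such that det M(y, ω) ≥ α for every y with dist(y, y_*) < δ and every ω ∈ W ∩ Ω. -/
open MeasureTheory Set

lemma psd_det_nonneg' {d : ℕ} {A : Matrix (Fin d) (Fin d) ℝ} (hA : A.PosSemidef) :
    0 ≤ A.det := by
  rw [hA.1.det_eq_prod_eigenvalues]
  exact Finset.prod_nonneg fun i _ => hA.eigenvalues_nonneg i

/-- uniform lower bound on the determinant of a continuous family of positive
semidefinite Gramian matrices away from a small exceptional open set. -/
theorem gramian_determinant_uniform_lower_bound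
    (Y : Type*) [MetricSpace Y]
    (p d : ℕ)
    (Ω : Set (EuclideanSpace ℝ (Fin p))) (hΩ : IsOpen Ω)
    (M : Y × EuclideanSpace ℝ (Fin p) → Matrix (Fin d) (Fin d) ℝ)
    (hMcont : ContinuousOn M (Set.univ ×ˢ Ω))
    (hMpsd : ∀ y : Y, ∀ ω ∈ Ω, (M (y, ω)).PosSemidef)
    (μ : Measure (EuclideanSpace ℝ (Fin p)))
    [IsFiniteMeasure μ] (hμac : μ ≪ volume) (hμΩ : μ Ωᶜ = 0)
    (K : Set (EuclideanSpace ℝ (Fin p))) (hK : IsCompact K) (hKΩ : K ⊆ Ω)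
    (hzero : ∀ y : Y, volume {ω ∈ Ω | (M (y, ω)).det = 0} = 0) :
    ∀ (ystar : Y) (ε : ℝ), 0 < ε →
      ∃ U : Set (EuclideanSpace ℝ (Fin p)), IsOpen U ∧ U ⊆ Ω ∧
        μ U < ENNReal.ofReal ε ∧
        ∃ δ : ℝ, 0 < δ ∧
          (∀ y : Y, dist y ystar < δ → {ω ∈ K | (M (y, ω)).det = 0} ⊆ U) ∧
          ∃ W : Set (EuclideanSpace ℝ (Fin p)), IsOpen W ∧ K ∩ Uᶜ ⊆ W ∧
            ∃ α : ℝ, 0 < α ∧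
              ∀ y : Y, dist y ystar < δ → ∀ ω ∈ W ∩ Ω, α ≤ (M (y, ω)).det := by
  intro ystar ε hε
  set f : Y × EuclideanSpace ℝ (Fin p) → ℝ := fun q => (M q).det with hf
  have hfcont : ContinuousOn f (Set.univ ×ˢ Ω) := by
    exact ContinuousOn.comp (Continuous.continuousOn (continuous_id.matrix_det)) hMcont
      (mapsTo_univ _ _)
  -- the exceptional set at `ystar`
  set A : Set (EuclideanSpace ℝ (Fin p)) := {ω ∈ K | f (ystar, ω) = 0} with hA
  have hAsub : A ⊆ {ω ∈ Ω | (M (ystar, ω)).det = 0} := fun ω hω => ⟨hKΩ hω.1, hω.2⟩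
  have hAμ : μ A = 0 := measure_mono_null hAsub (hμac (hzero ystar))
  obtain ⟨U₀, hAU₀, hU₀open, hU₀μ⟩ := Set.exists_isOpen_lt_of_lt A (ENNReal.ofReal ε)
    (by rw [hAμ]; exact ENNReal.ofReal_pos.2 hε)
  refine ⟨U₀ ∩ Ω, hU₀open.inter hΩ, inter_subset_right,
    lt_of_le_of_lt (measure_mono inter_subset_left) hU₀μ, ?_⟩
  set U : Set (EuclideanSpace ℝ (Fin p)) := U₀ ∩ Ω with hU
  set S : Set (EuclideanSpace ℝ (Fin p)) := K ∩ Uᶜ with hSdef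
  have hScomp : IsCompact S := hK.inter_right (hU₀open.inter hΩ).isClosed_compl
  have hpos : ∀ ω ∈ S, 0 < f (ystar, ω) := by
    rintro ω ⟨hωK, hωU⟩
    have hωΩ : ω ∈ Ω := hKΩ hωK
    have h0 : f (ystar, ω) ≠ 0 := fun h => hωU ⟨hAU₀ ⟨hωK, h⟩, hωΩ⟩
    exact lt_of_le_of_ne (psd_det_nonneg' (hMpsd ystar ω hωΩ)) (Ne.symm h0)
  have key : ∀ ω ∈ S, ∃ r > 0, Metric.ball ω r ⊆ Ω ∧
      ∀ y ω', dist y ystar < r → dist ω' ω < r → f (ystar, ω) / 2 < f (y, ω') := by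
    intro ω hωS
    have hωΩ : ω ∈ Ω := hKΩ hωS.1
    have hca : ContinuousAt f (ystar, ω) :=
      hfcont.continuousAt ((isOpen_univ.prod hΩ).mem_nhds ⟨trivial, hωΩ⟩)
    have hev : ∀ᶠ q in nhds (ystar, ω), f (ystar, ω) / 2 < f q :=
      hca.eventually (eventually_gt_nhds (by linarith [hpos ω hωS]))
    rw [Metric.eventually_nhds_iff] at hev
    obtain ⟨r₁, hr₁, h₁⟩ := hev
    obtain ⟨r₂, hr₂, h₂⟩ := Metric.isOpen_iff.1 hΩ ω hωΩ
    refine ⟨min r₁ r₂, lt_min hr₁ hr₂, ?_, ?_⟩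
    · exact (Metric.ball_subset_ball (min_le_right _ _)).trans h₂
    · intro y ω' hy hω'
      apply h₁
      rw [Prod.dist_eq]
      exact max_lt (lt_of_lt_of_le hy (min_le_left _ _))
        (lt_of_lt_of_le hω' (min_le_left _ _))
  choose! r hrpos hrball hrlow using key
  obtain ⟨t, htS, hcover⟩ := hScomp.elim_nhds_subcover (fun ω => Metric.ball ω (r ω))
    (fun ω hω => Metric.ball_mem_nhds ω (hrpos ω hω))
  rcases t.eq_empty_or_nonempty with hte | ht
  · have hSempty : S ⊆ (∅ : Set (EuclideanSpace ℝ (Fin p))) := by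
      intro ω hω
      have := hcover hω
      simp [hte] at this
    refine ⟨1, one_pos, ?_, ∅, isOpen_empty, hSempty, 1, one_pos, by simp⟩
    rintro y hy ω ⟨hωK, hdet⟩
    by_contra hωU
    exact hSempty ⟨hωK, hωU⟩
  · set δ : ℝ := t.inf' ht r with hδdef
    set α : ℝ := t.inf' ht (fun ω => f (ystar, ω) / 2) with hαdef
    have hδ : 0 < δ := (Finset.lt_inf'_iff ht).2 fun ω hω => hrpos ω (htS ω hω)
    have hα : 0 < α := (Finset.lt_inf'_iff ht).2 fun ω hω => half_pos (hpos ω (htS ω hω))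
    set W : Set (EuclideanSpace ℝ (Fin p)) := ⋃ ω ∈ t, Metric.ball ω (r ω) with hWdef
    have hWopen : IsOpen W :=
      isOpen_biUnion fun _ _ => Metric.isOpen_ball
    have hlow : ∀ y, dist y ystar < δ → ∀ ω' ∈ W ∩ Ω, α ≤ f (y, ω') := by
      rintro y hy ω' ⟨hW, _⟩
      simp only [hWdef, mem_iUnion, exists_prop] at hW
      obtain ⟨ω, hωt, hball⟩ := hW
      have hδle : δ ≤ r ω := Finset.inf'_le _ hωt
      have hlt := hrlow ω (htS ω hωt) y ω' (hy.trans_le hδle)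
        (by simpa [Metric.mem_ball] using hball)
      exact le_trans (Finset.inf'_le (fun ω => f (ystar, ω) / 2) hωt) hlt.le
    refine ⟨δ, hδ, ?_, W, hWopen, hcover, α, hα, hlow⟩
    rintro y hy ω ⟨hωK, hdet⟩
    by_contra hωU
    have hωS : ω ∈ S := ⟨hωK, hωU⟩
    have := hlow y hy ω ⟨hcover hωS, hKΩ hωK⟩
    rw [hf] at this
    simp only at this
    rw [hdet] at this
    linarith
end

section
/- Let j, k, ℓ ∈ ℤ² be nonzero with j + k + ℓ = 0, define C_{jk} := (⟨j, k^⊥⟩ / (4π)) (1/|j|² − 1/|k|²) (and similarly C_{kℓ}, C_{jℓ}), let σ ∈ {−1, 1}, and let x, y, z : ℝ → ℝ be differentiable functions satisfying the triad system x'(t) = σ C_{kℓ} y(t) z(t), y'(t) = σ C_{jℓ} x(t) z(t), z'(t) = σ C_{jk} x(t) y(t) for all t ∈ ℝ. Then both the enstrophy x(t)² + y(t)² + z(t)² and the energy x(t)²/|j|² + y(t)²/|k|² + z(t)²/|ℓ|² are constant in t. -/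
/-! Along a solution, `d/dt (x²/p + y²/q + z²/r) = 2xyz (a/p + b/q + c/r)`, so a weighted sum of
squares is conserved as soon as the coefficients `a, b, c` of the triad system satisfy
`a/p + b/q + c/r = 0`. For the Euler coefficients both `C_{kℓ} + C_{jℓ} + C_{jk}` and
`C_{kℓ}/|j|² + C_{jℓ}/|k|² + C_{jk}/|ℓ|²` vanish: with `ℓ = -(j + k)` the three cross
products are `±⟨j, k^⊥⟩`, and the remaining brackets of inverse squared norms cancel. -/

open Real

/-- The 2D Euler interaction constant
`C_{jk} := (⟨j, k^⊥⟩ / (4π)) (1/|j|² − 1/|k|²)` with `k^⊥ := (k₂, −k₁)`, so that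
`⟨j, k^⊥⟩ = j₁ k₂ − j₂ k₁`. -/
noncomputable def eulerC (j k : ℤ × ℤ) : ℝ :=
  (((j.1 : ℝ) * (k.2 : ℝ) - (j.2 : ℝ) * (k.1 : ℝ)) / (4 * Real.pi)) *
    (1 / ((j.1 : ℝ) ^ 2 + (j.2 : ℝ) ^ 2) - 1 / ((k.1 : ℝ) ^ 2 + (k.2 : ℝ) ^ 2))

theorem triad_sum_sq_div_eq {a b c p q r : ℝ} {x y z : ℝ → ℝ}
    (hx : ∀ t, HasDerivAt x (a * y t * z t) t) (hy : ∀ t, HasDerivAt y (b * x t * z t) t)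
    (hz : ∀ t, HasDerivAt z (c * x t * y t) t) (habc : a / p + b / q + c / r = 0) (t t' : ℝ) :
    x t ^ 2 / p + y t ^ 2 / q + z t ^ 2 / r = x t' ^ 2 / p + y t' ^ 2 / q + z t' ^ 2 / r := by
  have hderiv : ∀ s, HasDerivAt (fun s ↦ x s ^ 2 / p + y s ^ 2 / q + z s ^ 2 / r) 0 s := fun s ↦
    ((((hx s).pow 2).div_const p).add (((hy s).pow 2).div_const q)).add
      (((hz s).pow 2).div_const r) |>.congr_deriv (by linear_combination 2 * x s * y s * z s * habc)
  exact is_const_of_deriv_eq_zero (fun s ↦ (hderiv s).differentiableAt) (fun s ↦ (hderiv s).deriv)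
    t t'

theorem eulerC_triad_sum_eq_zero {j k ℓ : ℤ × ℤ} (hsum : j + k + ℓ = 0) :
    eulerC k ℓ + eulerC j ℓ + eulerC j k = 0 := by
  obtain rfl : ℓ = -(j + k) := eq_neg_of_add_eq_zero_right hsum
  simp only [eulerC, Prod.fst_neg, Prod.snd_neg, Prod.fst_add, Prod.snd_add]
  push_cast
  ring

theorem eulerC_triad_div_normSq_sum_eq_zero {j k ℓ : ℤ × ℤ} (hsum : j + k + ℓ = 0) :
    eulerC k ℓ / ((j.1 : ℝ) ^ 2 + (j.2 : ℝ) ^ 2) + eulerC j ℓ / ((k.1 : ℝ) ^ 2 + (k.2 : ℝ) ^ 2) +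
      eulerC j k / ((ℓ.1 : ℝ) ^ 2 + (ℓ.2 : ℝ) ^ 2) = 0 := by
  obtain rfl : ℓ = -(j + k) := eq_neg_of_add_eq_zero_right hsum
  simp only [eulerC, Prod.fst_neg, Prod.snd_neg, Prod.fst_add, Prod.snd_add]
  push_cast
  ring

theorem euler_triad_conserves_enstrophy_and_energy_general
    (j k ℓ : ℤ × ℤ)
    (hsum : j + k + ℓ = 0)
    (σ : ℝ)
    (x y z : ℝ → ℝ)
    (hx : ∀ t : ℝ, HasDerivAt x (σ * eulerC k ℓ * y t * z t) t)
    (hy : ∀ t : ℝ, HasDerivAt y (σ * eulerC j ℓ * x t * z t) t)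
    (hz : ∀ t : ℝ, HasDerivAt z (σ * eulerC j k * x t * y t) t) :
    (∀ t t' : ℝ,
      x t ^ 2 + y t ^ 2 + z t ^ 2 = x t' ^ 2 + y t' ^ 2 + z t' ^ 2) ∧
    (∀ t t' : ℝ,
      x t ^ 2 / ((j.1 : ℝ) ^ 2 + (j.2 : ℝ) ^ 2) +
        y t ^ 2 / ((k.1 : ℝ) ^ 2 + (k.2 : ℝ) ^ 2) +
        z t ^ 2 / ((ℓ.1 : ℝ) ^ 2 + (ℓ.2 : ℝ) ^ 2) =
      x t' ^ 2 / ((j.1 : ℝ) ^ 2 + (j.2 : ℝ) ^ 2) +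
        y t' ^ 2 / ((k.1 : ℝ) ^ 2 + (k.2 : ℝ) ^ 2) +
        z t' ^ 2 / ((ℓ.1 : ℝ) ^ 2 + (ℓ.2 : ℝ) ^ 2)) := by
  refine ⟨fun t t' ↦ ?_, triad_sum_sq_div_eq hx hy hz ?_⟩
  · simpa only [div_one] using triad_sum_sq_div_eq (p := 1) (q := 1) (r := 1) hx hy hz
      (by linear_combination σ * eulerC_triad_sum_eq_zero hsum) t t'
  · linear_combination σ * eulerC_triad_div_normSq_sum_eq_zero hsum

/-- each Euler triad system conserves both the enstrophy
`x² + y² + z²` and the energy `x²/|j|² + y²/|k|² + z²/|ℓ|²`. -/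
theorem euler_triad_conserves_enstrophy_and_energy
    (j k ℓ : ℤ × ℤ) (hj : j ≠ 0) (hk : k ≠ 0) (hl : ℓ ≠ 0)
    (hsum : j + k + ℓ = 0)
    (σ : ℝ) (hσ : σ = -1 ∨ σ = 1)
    (x y z : ℝ → ℝ)
    (hx : ∀ t : ℝ, HasDerivAt x (σ * eulerC k ℓ * y t * z t) t)
    (hy : ∀ t : ℝ, HasDerivAt y (σ * eulerC j ℓ * x t * z t) t)
    (hz : ∀ t : ℝ, HasDerivAt z (σ * eulerC j k * x t * y t) t) :
    (∀ t t' : ℝ,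
      x t ^ 2 + y t ^ 2 + z t ^ 2 = x t' ^ 2 + y t' ^ 2 + z t' ^ 2) ∧
    (∀ t t' : ℝ,
      x t ^ 2 / ((j.1 : ℝ) ^ 2 + (j.2 : ℝ) ^ 2) +
        y t ^ 2 / ((k.1 : ℝ) ^ 2 + (k.2 : ℝ) ^ 2) +
        z t ^ 2 / ((ℓ.1 : ℝ) ^ 2 + (ℓ.2 : ℝ) ^ 2) =
      x t' ^ 2 / ((j.1 : ℝ) ^ 2 + (j.2 : ℝ) ^ 2) +
        y t' ^ 2 / ((k.1 : ℝ) ^ 2 + (k.2 : ℝ) ^ 2) +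
        z t' ^ 2 / ((ℓ.1 : ℝ) ^ 2 + (ℓ.2 : ℝ) ^ 2)) :=
  euler_triad_conserves_enstrophy_and_energy_general j k ℓ hsum σ x y z hx hy hz
end

section
/- Let n ≥ 4 be a natural number and R > 0 a real number, and set a := −R/√(4n−6) and b := √2 R/√(2n−3). Then a ≠ 0, b ≠ 0, and the following hold: (i) 2a² + (n−2)b² = R²; (ii) 2a² + 5ab + 2b² = 0; (iii) a³ + a b² + 2b³ ≠ 0; (iv) 2b − a ≠ 0. -/
open Real

/-! With `c := 2n - 3 > 0` one has `√(4n - 6) = √2 · √c`, so `b = -2a`. Every relation then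
becomes a polynomial identity in `a` alone: (ii) vanishes identically, (iii) and (iv) are
`-11 a³` and `-5 a`, and (i) is `(4n - 6) a² = R²`. -/

theorem sqrt_two_mul_div_sqrt_eq_neg_two_mul (R c : ℝ) :
    √2 * R / √c = -2 * (-R / √(2 * c)) := by
  have h2 : (√2)⁻¹ * 2 = √2 := by
    rw [inv_mul_eq_iff_eq_mul₀ (sqrt_pos.2 two_pos).ne', mul_self_sqrt zero_le_two]
  rw [sqrt_mul zero_le_two]
  linear_combination -(R / √c) * h2

theorem mul_sq_div_sqrt {c : ℝ} (hc : 0 < c) (R : ℝ) : c * (R / √c) ^ 2 = R ^ 2 := by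
  rw [div_pow, sq_sqrt hc.le]
  field_simp

/-- the algebraic relations satisfied by `a := −R/√(4n−6)` and
`b := √2 R/√(2n−3)` for `n ≥ 4` and `R > 0`, used in the Lorenz-96 Lie bracket
spanning argument. -/
theorem lorenz_spanning_point_relations
    (n : ℕ) (hn : 4 ≤ n) (R : ℝ) (hR : 0 < R) :
    let a : ℝ := -R / Real.sqrt (4 * (n : ℝ) - 6)
    let b : ℝ := Real.sqrt 2 * R / Real.sqrt (2 * (n : ℝ) - 3)
    a ≠ 0 ∧ b ≠ 0 ∧
    2 * a ^ 2 + ((n : ℝ) - 2) * b ^ 2 = R ^ 2 ∧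
    2 * a ^ 2 + 5 * a * b + 2 * b ^ 2 = 0 ∧
    a ^ 3 + a * b ^ 2 + 2 * b ^ 3 ≠ 0 ∧
    2 * b - a ≠ 0 := by
  intro a b
  have hc : 0 < 4 * (n : ℝ) - 6 := by
    have : (4 : ℝ) ≤ n := by exact_mod_cast hn
    linarith
  have hc_eq : 4 * (n : ℝ) - 6 = 2 * (2 * n - 3) := by ring
  have ha : a ≠ 0 := div_ne_zero (neg_ne_zero.2 hR.ne') (sqrt_pos.2 hc).ne'
  have hb : b = -2 * a := by
    show √2 * R / √(2 * (n : ℝ) - 3) = -2 * (-R / √(4 * (n : ℝ) - 6))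
    rw [hc_eq]
    exact sqrt_two_mul_div_sqrt_eq_neg_two_mul R _
  have hR2 : (4 * (n : ℝ) - 6) * a ^ 2 = R ^ 2 := by
    show (4 * (n : ℝ) - 6) * (-R / √(4 * (n : ℝ) - 6)) ^ 2 = R ^ 2
    simpa only [neg_div, neg_sq] using mul_sq_div_sqrt hc (-R)
  rw [hb]
  refine ⟨ha, mul_ne_zero (by norm_num) ha, by linear_combination hR2, by ring, ?_, ?_⟩
  · rw [show a ^ 3 + a * (-2 * a) ^ 2 + 2 * (-2 * a) ^ 3 = -11 * a ^ 3 by ring]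
    exact mul_ne_zero (by norm_num) (pow_ne_zero 3 ha)
  · rw [show 2 * (-2 * a) - a = -5 * a by ring]
    exact mul_ne_zero (by norm_num) ha
end
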